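/- There exists an absolute constant C > 0 such that for every d ≥ 1, every Boolean function g : {0,1}^d → {0,1}, and every coloring ξ : E({0,1}^d) → {0,1} of the edges of the Boolean hypercube, E_{z ∈ {0,1}^d}[ sqrt(I_{g,ξ}(z)) ] ≥ C · var(g). -/

import Mathlib

open scoped Classical

noncomputable section

/-- The Boolean hypercube `{0,1}^d`. -/
abbrev Cube (d : ℕ) := Fin d → Bool

/-- Colored (undirected) influence of `z` for `g : {0,1}^d → {0,1}`, with respect to an
edge coloring `ξ` of the hypercube (the color of the edge in direction `i` through `z`
is `ξ (z with i-th coordinate set to false) i`, so that the color depends only on the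
edge): the number of sensitive edges incident to `z` whose color equals `g z`. -/
def cubeColInf {d : ℕ} (g : Cube d → Bool) (ξ : Cube d → Fin d → Bool) (z : Cube d) : ℕ :=
  (Finset.univ.filter (fun i : Fin d =>
    g z ≠ g (Function.update z i (!z i)) ∧
      g z = ξ (Function.update z i false) i)).card

/-- The variance of `g`: `Pr[g = 0] · Pr[g = 1]` under the uniform distribution. -/
def varCube {d : ℕ} (g : Cube d → Bool) : ℝ :=
  (((Finset.univ.filter (fun z : Cube d => g z = false)).card : ℝ) / 2 ^ d) *
    (((Finset.univ.filter (fun z : Cube d => g z = true)).card : ℝ) / 2 ^ d)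

/-!
Induction on `d`, in the form `t (2^d - t) / 8 ≤ ∑ z, √(I z)` with `t = #{z | g z = true}`.
Split the cube along the first coordinate into two facets with `t₀` and `t₁` ones: the target
for `d + 1` exceeds the sum of the facets' targets by `(t₀ - t₁)² / 2^(d+4)`. Going from a facet
to the whole cube, the influence of `(b, x)` gains the cross edge when that edge is sensitive and
colored `g (b, x)`. A sensitive cross edge is colored by one of its two endpoint values, so it
counts on one side, and some facet `b` has `U ≥ |t₀ - t₁| / 2` such points. As
`√(a + 1) - √a = 1 / (√(a + 1) + √a)`, Cauchy–Schwarz turns these `U` unit increments into a gain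
`G` with `U² ≤ G (U + 2 S)`, where `S` is the facet's `∑ √I`. Either `S ≥ 2^d`, which already
exceeds the target, or `G ≥ U² / (3 · 2^d)`, which pays for the cross term.
-/

open Finset

section SqrtGain

variable {ι : Type*}

theorem sqrt_add_one_le_one_add_sqrt {a : ℝ} (ha : 0 ≤ a) : √(a + 1) ≤ 1 + √a := by
  rw [Real.sqrt_le_left (by positivity)]
  nlinarith [Real.sq_sqrt ha, Real.sqrt_nonneg a]

theorem sum_sqrt_add_indicator [Fintype ι] (a : ι → ℝ) (s : Finset ι) :
    ∑ i, √(a i + if i ∈ s then 1 else 0) = ∑ i, √(a i) + ∑ i ∈ s, (√(a i + 1) - √(a i)) := by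
  rw [← univ_inter s, ← sum_ite_mem, ← sum_add_distrib]
  refine sum_congr rfl fun i _ => ?_
  by_cases hi : i ∈ s <;> simp [hi]

/-- Cauchy–Schwarz applied to `(√(a+1) - √a) (√(a+1) + √a) = 1`. -/
theorem sq_card_le_sum_sqrt_add_one_sub_mul {a : ι → ℝ} (ha : ∀ i, 0 ≤ a i) (s : Finset ι) :
    (#s : ℝ) ^ 2 ≤ (∑ i ∈ s, (√(a i + 1) - √(a i))) * (#s + 2 * ∑ i ∈ s, √(a i)) := by
  have hmono : ∀ i, √(a i) ≤ √(a i + 1) := fun i => Real.sqrt_le_sqrt (by linarith)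
  have hprod : ∀ i, (√(a i + 1) - √(a i)) * (√(a i + 1) + √(a i)) = 1 := fun i => by
    nlinarith [Real.sq_sqrt (ha i), Real.sq_sqrt (by linarith [ha i] : 0 ≤ a i + 1)]
  calc (#s : ℝ) ^ 2 = (∑ _i ∈ s, (1 : ℝ)) ^ 2 := by simp
    _ ≤ (∑ i ∈ s, (√(a i + 1) - √(a i))) * ∑ i ∈ s, (√(a i + 1) + √(a i)) :=
      sum_sq_le_sum_mul_sum_of_sq_le_mul s (fun i _ => sub_nonneg.2 (hmono i))
        (fun i _ => by positivity) (fun i _ => by rw [hprod]; norm_num)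
    _ ≤ (∑ i ∈ s, (√(a i + 1) - √(a i))) * (#s + 2 * ∑ i ∈ s, √(a i)) := by
      gcongr
      · exact sum_nonneg fun i _ => sub_nonneg.2 (hmono i)
      · calc ∑ i ∈ s, (√(a i + 1) + √(a i)) ≤ ∑ i ∈ s, (1 + 2 * √(a i)) :=
              sum_le_sum fun i _ => by linarith [sqrt_add_one_le_one_add_sqrt (ha i)]
          _ = #s + 2 * ∑ i ∈ s, √(a i) := by simp [sum_add_distrib, mul_sum]

end SqrtGain

theorem card_true_le_card_true_add_card_ne {α : Type*} [Fintype α] (f h : α → Bool) :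
    #{x | f x = true} ≤ #{x | h x = true} + #{x | f x ≠ h x} := by
  refine (card_le_card_sdiff_add_card (t := {x | h x = true})).trans ?_
  rw [add_comm]
  gcongr
  intro x
  simp only [mem_sdiff, mem_filter, mem_univ, true_and]
  grind

section Facets

variable {d : ℕ}

theorem card_cube (d : ℕ) : Fintype.card (Cube d) = 2 ^ d := by
  simp

theorem sum_cube_succ {M : Type*} [AddCommMonoid M] (F : Cube (d + 1) → M) (b : Bool) :
    ∑ z, F z = ∑ x : Cube d, F (Fin.cons b x) + ∑ x : Cube d, F (Fin.cons (!b) x) := by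
  rw [← (Fin.consEquiv fun _ => Bool).sum_comp, Fintype.sum_prod_type, Fintype.sum_bool]
  cases b <;> simp [Fin.consEquiv, add_comm]

def facet (g : Cube (d + 1) → Bool) (b : Bool) : Cube d → Bool := fun x => g (Fin.cons b x)

def facetColoring (ξ : Cube (d + 1) → Fin (d + 1) → Bool) (b : Bool) : Cube d → Fin d → Bool :=
  fun x j => ξ (Fin.cons b x) j.succ

def coloredCrossEdges (g : Cube (d + 1) → Bool) (ξ : Cube (d + 1) → Fin (d + 1) → Bool)
    (b : Bool) : Finset (Cube d) :=
  {x | g (Fin.cons b x) ≠ g (Fin.cons (!b) x) ∧ g (Fin.cons b x) = ξ (Fin.cons false x) 0}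

theorem cubeColInf_cons (g : Cube (d + 1) → Bool) (ξ : Cube (d + 1) → Fin (d + 1) → Bool)
    (b : Bool) (x : Cube d) :
    cubeColInf g ξ (Fin.cons b x) = cubeColInf (facet g b) (facetColoring ξ b) x +
      if x ∈ coloredCrossEdges g ξ b then 1 else 0 := by
  rw [cubeColInf, card_filter, Fin.sum_univ_succ, add_comm, cubeColInf, card_filter]
  congr 1
  · refine sum_congr rfl fun j _ => ?_
    simp only [facet, facetColoring, Fin.cons_succ, ← Fin.cons_update]
    congr
  · simp [coloredCrossEdges, Fin.update_cons_zero]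

theorem card_true_le (g : Cube d → Bool) : #{z | g z = true} ≤ 2 ^ d :=
  card_cube d ▸ card_filter_le _ _

theorem card_true_cube_succ (g : Cube (d + 1) → Bool) (b : Bool) :
    #{z | g z = true} = #{x | facet g b x = true} + #{x | facet g (!b) x = true} := by
  simp only [card_filter]
  exact sum_cube_succ _ b

theorem card_facet_ne_le (g : Cube (d + 1) → Bool) (ξ : Cube (d + 1) → Fin (d + 1) → Bool) :
    #{x | facet g false x ≠ facet g true x} ≤
      #(coloredCrossEdges g ξ false) + #(coloredCrossEdges g ξ true) := by
  refine (card_le_card fun x hx => ?_).trans (card_union_le _ _)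
  replace hx : g (Fin.cons false x) ≠ g (Fin.cons true x) := (mem_filter.1 hx).2
  simp only [coloredCrossEdges, mem_union, mem_filter, mem_univ, true_and, Bool.not_false,
    Bool.not_true]
  revert hx
  cases g (Fin.cons false x) <;> cases g (Fin.cons true x) <;> cases ξ (Fin.cons false x) 0 <;>
    simp

theorem exists_abs_card_true_facet_sub_le (g : Cube (d + 1) → Bool)
    (ξ : Cube (d + 1) → Fin (d + 1) → Bool) : ∃ b,
    |(#{x | facet g b x = true} : ℝ) - #{x | facet g (!b) x = true}| ≤
      2 * #(coloredCrossEdges g ξ b) := by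
  have h₀ : (#{x | facet g false x = true} : ℝ) ≤
      #{x | facet g true x = true} + #{x | facet g false x ≠ facet g true x} := by
    exact_mod_cast card_true_le_card_true_add_card_ne (facet g false) (facet g true)
  have h₁ : (#{x | facet g true x = true} : ℝ) ≤
      #{x | facet g false x = true} + #{x | facet g false x ≠ facet g true x} := by
    simp only [ne_comm (a := facet g false _)]
    exact_mod_cast card_true_le_card_true_add_card_ne (facet g true) (facet g false)
  have hcross : (#{x | facet g false x ≠ facet g true x} : ℝ) ≤
      #(coloredCrossEdges g ξ false) + #(coloredCrossEdges g ξ true) := by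
    exact_mod_cast card_facet_ne_le g ξ
  rcases le_total (#(coloredCrossEdges g ξ false) : ℝ) #(coloredCrossEdges g ξ true) with h | h
  · exact ⟨true, abs_sub_le_iff.2 ⟨by simp only [Bool.not_true]; linarith,
      by simp only [Bool.not_true]; linarith⟩⟩
  · exact ⟨false, abs_sub_le_iff.2 ⟨by simp only [Bool.not_false]; linarith,
      by simp only [Bool.not_false]; linarith⟩⟩

theorem sum_sqrt_cubeColInf_cons (g : Cube (d + 1) → Bool)
    (ξ : Cube (d + 1) → Fin (d + 1) → Bool) (b : Bool) :
    ∑ x : Cube d, √(cubeColInf g ξ (Fin.cons b x)) =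
      ∑ x, √(cubeColInf (facet g b) (facetColoring ξ b) x) +
        ∑ x ∈ coloredCrossEdges g ξ b, (√(cubeColInf (facet g b) (facetColoring ξ b) x + 1) -
          √(cubeColInf (facet g b) (facetColoring ξ b) x)) := by
  rw [← sum_sqrt_add_indicator]
  refine sum_congr rfl fun x _ => ?_
  rw [cubeColInf_cons]
  push_cast
  congr

end Facets

theorem facet_induction_bound {N t t' S S' T T' U G : ℝ} (hN : 0 < N)
    (ht : t ∈ Set.Icc 0 N) (ht' : t' ∈ Set.Icc 0 N)
    (hIH : t * (N - t) / (8 * N) ≤ S) (hIH' : t' * (N - t') / (8 * N) ≤ S')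
    (hU : U ≤ N) (htU : |t - t'| ≤ 2 * U) (hG : 0 ≤ G) (hUG : U ^ 2 ≤ G * (U + 2 * S))
    (hT : S + G ≤ T) (hT' : S' ≤ T') :
    (t + t') * (N * 2 - (t + t')) / (8 * (N * 2)) ≤ T + T' := by
  obtain ⟨ht₀, htN⟩ := ht
  obtain ⟨ht₀', htN'⟩ := ht'
  have hS' : 0 ≤ S' := le_trans (by positivity) hIH'
  rcases le_total N S with hSN | hSN
  · have hmax : (t + t') * (N * 2 - (t + t')) ≤ N ^ 2 := by nlinarith [sq_nonneg (t + t' - N)]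
    calc (t + t') * (N * 2 - (t + t')) / (8 * (N * 2)) ≤ N ^ 2 / (8 * (N * 2)) := by gcongr
      _ ≤ T + T' := by
        rw [div_le_iff₀ (by positivity)]
        nlinarith
  · have hsplit : (t + t') * (N * 2 - (t + t')) / (8 * (N * 2)) =
        t * (N - t) / (8 * N) + t' * (N - t') / (8 * N) + (t - t') ^ 2 / (16 * N) := by
      field_simp
      ring
    -- `U + 2 S ≤ 3 N`, so the gain `G ≥ U² / (3 N)` pays for the cross term.
    have hcross : (t - t') ^ 2 / (16 * N) ≤ G := by
      rw [div_le_iff₀ (by positivity)]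
      nlinarith [sq_abs (t - t'), abs_nonneg (t - t'), mul_le_mul_of_nonneg_left
        (show U + 2 * S ≤ 3 * N by linarith) hG]
    linarith

theorem card_true_mul_div_le_sum_sqrt_cubeColInf (d : ℕ) (g : Cube d → Bool)
    (ξ : Cube d → Fin d → Bool) :
    (#{z | g z = true} : ℝ) * (2 ^ d - #{z | g z = true}) / (8 * 2 ^ d) ≤
      ∑ z, √(cubeColInf g ξ z) := by
  induction d with
  | zero =>
    have h : #{z | g z = true} ≤ 1 := card_true_le g
    calc (#{z | g z = true} : ℝ) * (2 ^ 0 - #{z | g z = true}) / (8 * 2 ^ 0) = 0 := by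
          rcases Nat.le_one_iff_eq_zero_or_eq_one.1 h with h | h <;> rw [h] <;> norm_num
      _ ≤ _ := by positivity
  | succ d ih =>
    obtain ⟨b, hb⟩ := exists_abs_card_true_facet_sub_le g ξ
    have hgain : ∀ b, 0 ≤ ∑ x ∈ coloredCrossEdges g ξ b,
        (√(cubeColInf (facet g b) (facetColoring ξ b) x + 1) -
          √(cubeColInf (facet g b) (facetColoring ξ b) x)) :=
      fun b => sum_nonneg fun x _ => sub_nonneg.2 (Real.sqrt_le_sqrt (by linarith))
    have hcount : ∀ h : Cube d → Bool, (#{x | h x = true} : ℝ) ∈ Set.Icc 0 (2 ^ d) :=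
      fun h => ⟨by positivity, by exact_mod_cast card_true_le h⟩
    rw [card_true_cube_succ g b, sum_cube_succ _ b, sum_sqrt_cubeColInf_cons g ξ b, pow_succ]
    push_cast
    refine facet_induction_bound (by positivity) (hcount _) (hcount _)
      (ih (facet g b) (facetColoring ξ b)) (ih (facet g !b) (facetColoring ξ !b))
      (by exact_mod_cast card_cube d ▸ card_le_univ _) hb (hgain b) ?_ le_rfl ?_
    · refine (sq_card_le_sum_sqrt_add_one_sub_mul
        (a := fun x => (cubeColInf (facet g b) (facetColoring ξ b) x : ℝ))
        (fun x => Nat.cast_nonneg _) _).trans ?_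
      gcongr
      · exact hgain b
      · exact subset_univ _
    · rw [sum_sqrt_cubeColInf_cons g ξ !b]
      exact le_add_of_nonneg_right (hgain !b)

/-- the colored (robust) undirected Talagrand inequality on the Boolean
hypercube (Khot–Minzer–Safra). -/
theorem colored_talagrand_hypercube :
    ∃ C : ℝ, 0 < C ∧
      ∀ (d : ℕ), 1 ≤ d →
        ∀ (g : Cube d → Bool) (ξ : Cube d → Fin d → Bool),
          (∑ z : Cube d, Real.sqrt (cubeColInf g ξ z)) / 2 ^ d ≥ C * varCube g := by
  refine ⟨1 / 8, by norm_num, fun d _ g ξ => ?_⟩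
  have hfalse : (#{z | g z = false} : ℝ) = 2 ^ d - #{z | g z = true} := by
    have h := card_filter_add_card_filter_not (s := univ) fun z : Cube d => g z = true
    simp only [Bool.not_eq_true, card_univ, card_cube] at h
    rw [eq_sub_iff_add_eq, add_comm]
    exact_mod_cast h
  calc 1 / 8 * varCube g
      = (#{z | g z = true} : ℝ) * (2 ^ d - #{z | g z = true}) / (8 * 2 ^ d) / 2 ^ d := by
        rw [varCube, hfalse]
        ring
    _ ≤ (∑ z, √(cubeColInf g ξ z)) / 2 ^ d := by
        gcongr
        exact card_true_mul_div_le_sum_sqrt_cubeColInf d g ξ
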